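/- Let G be a finite group and L an involutive anti-automorphism of G, and define τ(g) = L(g⁻¹) (an involutive automorphism of G). For an irreducible character χ satisfying χ(L(g)) = χ(g) for all g, the twisted Frobenius–Schur indicator c_τ(χ) = |G|⁻¹ Σ_{g∈G} χ(g τ(g)) equals ±1. -/

import Mathlib

/-!
Realise `V^τ ⊗ V` as the space of matrices, `g` acting by `M ↦ ρ(τ g) M ρ(g)ᵀ`. Since
`χ ∘ τ = χ(·⁻¹)`, orthogonality of characters makes its invariants a line. The transpose
preserves that line (because `τ² = 1`) and squares to the identity, so it acts on it by `±1`;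
hence the trace of the transpose composed with the averaging projection is `±1`. Computing that
trace term by term gives the twisted indicator, since on `A ⊗ B` followed by the swap the trace
is `tr (A B)`.
-/

open CategoryTheory

theorem LinearMap.IsProj.trace_mul_eq_one_or_neg_one {K W : Type*} [Field K] [AddCommGroup W]
    [Module K W] [FiniteDimensional K W] {p : Submodule K W} {P t : W →ₗ[K] W}
    (hP : IsProj p P) (hp : Module.finrank K p = 1) (htp : ∀ x ∈ p, t x ∈ p)
    (htt : ∀ x ∈ p, t (t x) = x) :
    LinearMap.trace K W (t * P) = 1 ∨ LinearMap.trace K W (t * P) = -1 := by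
  obtain ⟨v, hv, hspan⟩ := finrank_eq_one_iff'.mp hp
  have hcoord : ∀ w ∈ p, ∃ a : K, w = a • (v : W) := fun w hw => by
    obtain ⟨a, ha⟩ := hspan ⟨w, hw⟩
    exact ⟨a, by simpa using (congrArg Subtype.val ha).symm⟩
  obtain ⟨c, hc⟩ := hcoord (t v) (htp v v.2)
  have hc2 : c * c = 1 := by
    have h : (c * c) • (v : W) = (1 : K) • (v : W) := by
      rw [one_smul, mul_smul, ← hc, ← map_smul, ← hc, htt v v.2]
    exact smul_left_injective K (by simpa using hv) h
  have htP : t * P = c • P := by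
    ext x
    obtain ⟨a, ha⟩ := hcoord (P x) (hP.map_mem x)
    simp [ha, hc, smul_smul, mul_comm]
  rw [htP, map_smul, hP.trace, hp, Nat.cast_one, smul_eq_mul, mul_one]
  exact mul_self_eq_one_iff.mp hc2

theorem Representation.averageMap_eq_smul_sum {k G V : Type*} [CommRing k] [Group G] [Fintype G]
    [AddCommGroup V] [Module k V] [Invertible (Fintype.card G : k)] (ρ : Representation k G V) :
    ρ.averageMap = ⅟(Fintype.card G : k) • ∑ g, ρ g := by
  simp [GroupAlgebra.average, map_sum]

namespace Matrix

variable {R n : Type*} [CommRing R] [Fintype n] [DecidableEq n]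

theorem trace_linearMap_eq_sum_single (f : Matrix n n R →ₗ[R] Matrix n n R) :
    LinearMap.trace R _ f = ∑ i, ∑ j, f (single i j 1) i j := by
  rw [LinearMap.trace_eq_matrix_trace R (stdBasis R n n), trace, Fintype.sum_prod_type]
  simp only [diag_apply, LinearMap.toMatrix_apply, stdBasis_eq_single]
  simp [stdBasis]

theorem trace_mulLeft_comp_mulRight (A B : Matrix n n R) :
    LinearMap.trace R _ (LinearMap.mulLeft R A ∘ₗ LinearMap.mulRight R B) =
      A.trace * B.trace := by
  simp [trace_linearMap_eq_sum_single, mul_apply, single, trace, Finset.sum_mul_sum, ite_and]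

theorem trace_mulLeft_comp_mulRight_comp_transpose (A B : Matrix n n R) :
    LinearMap.trace R _ (LinearMap.mulLeft R A ∘ₗ LinearMap.mulRight R B ∘ₗ
      (transposeLinearEquiv n n R R).toLinearMap) = (Aᵀ * B).trace := by
  simp [trace_linearMap_eq_sum_single, mul_apply, single, trace, ite_and]
  exact Finset.sum_comm

section Monoid

variable {G : Type*} [Monoid G]

/-- The representation `(ρ ∘ σ) ⊗ ρ` in matrix form (`x ⊗ y ↦ x yᵀ`); the transpose is then the
swap of the two tensor factors. -/
def twistedTensorRep (ρ : G →* Matrix n n R) (σ : G →* G) :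
    Representation R G (Matrix n n R) where
  toFun g := LinearMap.mulLeft R (ρ (σ g)) ∘ₗ LinearMap.mulRight R (ρ g)ᵀ
  map_one' := by ext1; simp
  map_mul' g h := by ext1; simp [transpose_mul, mul_assoc]

variable (ρ : G →* Matrix n n R) (σ : G →* G)

theorem twistedTensorRep_apply (g : G) (M : Matrix n n R) :
    twistedTensorRep ρ σ g M = ρ (σ g) * M * (ρ g)ᵀ := by
  simp [twistedTensorRep, mul_assoc]

theorem trace_twistedTensorRep (g : G) :
    LinearMap.trace R _ (twistedTensorRep ρ σ g) = (ρ (σ g)).trace * (ρ g).trace := by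
  simp [twistedTensorRep, trace_mulLeft_comp_mulRight]

theorem trace_twistedTensorRep_comp_transpose (g : G) :
    LinearMap.trace R _ (twistedTensorRep ρ σ g ∘ₗ (transposeLinearEquiv n n R R).toLinearMap) =
      (ρ (g * σ g)).trace := by
  simp only [twistedTensorRep, MonoidHom.coe_mk, OneHom.coe_mk, LinearMap.comp_assoc,
    trace_mulLeft_comp_mulRight_comp_transpose, map_mul, ← transpose_mul, trace_transpose]

end Monoid

theorem transpose_mem_invariants_twistedTensorRep {G : Type*} [Group G] (ρ : G →* Matrix n n R)
    {σ : G →* G} (hσ : ∀ g, σ (σ g) = g) {M : Matrix n n R}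
    (hM : M ∈ (twistedTensorRep ρ σ).invariants) :
    Mᵀ ∈ (twistedTensorRep ρ σ).invariants := fun g => by
  have hσM : ρ g * M * (ρ (σ g))ᵀ = M := by simpa [twistedTensorRep_apply, hσ] using hM (σ g)
  rw [twistedTensorRep_apply]
  conv_rhs => rw [← hσM]
  simp [transpose_mul, mul_assoc]

end Matrix

namespace FDRep

variable {k G : Type*} [Field k] [Group G] [Fintype G]

noncomputable def twistedIndicator (V : FDRep k G) (σ : G →* G) : k :=
  (Nat.card G : k)⁻¹ * ∑ g, V.character (g * σ g)

theorem twistedIndicator_eq_one_or_neg_one [IsAlgClosed k] [CharZero k]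
    (V : FDRep k G) [Simple V] {σ : G →* G} (hσ : ∀ g, σ (σ g) = g)
    (hχ : ∀ g, V.character (σ g) = V.character g⁻¹) :
    V.twistedIndicator σ = 1 ∨ V.twistedIndicator σ = -1 := by
  classical
  let ι := Module.Free.ChooseBasisIndex k V
  let b := Module.Free.chooseBasis k V
  let R : G →* Matrix ι ι k := (LinearMap.toMatrixAlgEquiv b).toRingEquiv.toMonoidHom.comp V.ρ
  have hR : ∀ g, (R g).trace = V.character g := fun g =>
    (LinearMap.trace_eq_matrix_trace k b (V.ρ g)).symm
  let ρ := Matrix.twistedTensorRep R σ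
  let transpose := (Matrix.transposeLinearEquiv ι ι k k).toLinearMap
  have hcard : (Fintype.card G : k) = Nat.card G := by rw [Fintype.card_eq_nat_card]
  have : Invertible (Nat.card G : k) := invertibleOfNonzero (by simp)
  have : Invertible (Fintype.card G : k) := invertibleOfNonzero (by simp)
  have hrank : Module.finrank k ρ.invariants = 1 := by
    have horth := char_orthonormal V V
    rw [if_pos ⟨Iso.refl V⟩] at horth
    rw [← Nat.cast_inj (R := k), ← ρ.card_inv_mul_sum_char_eq_finrank]
    simpa [Representation.character, ρ, Matrix.trace_twistedTensorRep, hR, hχ, mul_comm]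
      using horth
  have htrace : V.twistedIndicator σ = LinearMap.trace k _ (transpose * ρ.averageMap) := by
    rw [LinearMap.trace_mul_comm, Representation.averageMap_eq_smul_sum, smul_mul_assoc,
      Finset.sum_mul, map_smul, map_sum, invOf_eq_inv, hcard]
    simp only [twistedIndicator, smul_eq_mul, Module.End.mul_eq_comp, ρ, transpose,
      Matrix.trace_twistedTensorRep_comp_transpose, hR]
  rw [htrace]
  exact ρ.isProj_averageMap.trace_mul_eq_one_or_neg_one hrank
    (fun M hM => Matrix.transpose_mem_invariants_twistedTensorRep R hσ hM)
    (fun M _ => M.transpose_transpose)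

end FDRep

section AntiHom

variable {G : Type*} [Group G] {L : G → G}

theorem map_one_of_antiHom (hL : ∀ g h, L (g * h) = L h * L g) : L 1 = 1 := by
  simpa using hL 1 1

theorem map_inv_of_antiHom (hL : ∀ g h, L (g * h) = L h * L g) (g : G) : L g⁻¹ = (L g)⁻¹ :=
  eq_inv_of_mul_eq_one_left (by rw [← hL, mul_inv_cancel, map_one_of_antiHom hL])

def twistOfAntiHom (hL : ∀ g h, L (g * h) = L h * L g) : G →* G where
  toFun g := L g⁻¹
  map_one' := by rw [inv_one, map_one_of_antiHom hL]
  map_mul' g h := by rw [mul_inv_rev, hL]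

theorem twistOfAntiHom_twistOfAntiHom (hL : ∀ g h, L (g * h) = L h * L g)
    (hLL : ∀ g, L (L g) = g) (g : G) : twistOfAntiHom hL (twistOfAntiHom hL g) = g := by
  simp [twistOfAntiHom, map_inv_of_antiHom hL, hLL]

end AntiHom

/-- let `G` be a finite group, `L` an involutive anti-automorphism of `G`,
and `τ g = L g⁻¹` the associated involutive automorphism.  For any irreducible complex
character `χ` with `χ (L g) = χ g` for all `g`, the twisted Frobenius–Schur indicator
`c_τ(χ) = |G|⁻¹ Σ_g χ (g · τ(g))` equals `±1`. -/
theorem gelfand_stmt9 {G : Type} [Group G] [Fintype G]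
    (L : G → G)
    (hanti : ∀ g h : G, L (g * h) = L h * L g) (hinv : ∀ g : G, L (L g) = g)
    (V : FDRep ℂ G) (hV : Simple V)
    (hLchar : ∀ g : G, V.character (L g) = V.character g) :
    (Fintype.card G : ℂ)⁻¹ * ∑ g : G, V.character (g * L g⁻¹) = 1 ∨
    (Fintype.card G : ℂ)⁻¹ * ∑ g : G, V.character (g * L g⁻¹) = -1 := by
  have := V.twistedIndicator_eq_one_or_neg_one (σ := twistOfAntiHom hanti)
    (twistOfAntiHom_twistOfAntiHom hanti hinv) (fun g => hLchar g⁻¹)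
  simpa [FDRep.twistedIndicator, twistOfAntiHom, Nat.card_eq_fintype_card] using this
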